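/- Let Δ be an irreducible root system whose highest root θ is a fundamental weight, and let α̂ be the unique simple root with (θ, α̂) ≠ 0. Then α̂ is long, the coefficient of α̂ in θ equals 2, and q_{α̂} = h* − 1, where h* is the dual Coxeter number. -/

import Mathlib

open scoped RealInnerProductSpace
open scoped Classical

/-- An (irreducible, reduced, crystallographic) root system in a real inner product
space `V`, together with a choice of base (simple roots), coordinate functions with
respect to the base, and fundamental weights. -/
structure RootSystemData (V : Type*) [NormedAddCommGroup V] [InnerProductSpace ℝ V] where
  Δ : Finset V
  base : Finset V
  base_sub : base ⊆ Δ
  root_ne_zero : ∀ γ ∈ Δ, γ ≠ 0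
  span_eq_top : Submodule.span ℝ (Δ : Set V) = ⊤
  reflect_mem : ∀ γ ∈ Δ, ∀ δ ∈ Δ, δ - (2 * ⟪δ, γ⟫ / ⟪γ, γ⟫) • γ ∈ Δ
  crystallographic : ∀ γ ∈ Δ, ∀ δ ∈ Δ, ∃ k : ℤ, 2 * ⟪δ, γ⟫ / ⟪γ, γ⟫ = (k : ℝ)
  reduced : ∀ γ ∈ Δ, (2 : ℝ) • γ ∉ Δ
  coord : V → V → ℝ
  coord_add : ∀ α x y, coord (x + y) α = coord x α + coord y α
  coord_smul : ∀ α (c : ℝ) (x : V), coord (c • x) α = c * coord x α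
  coord_base : ∀ α ∈ base, ∀ β ∈ base, coord β α = if β = α then 1 else 0
  root_decomp : ∀ γ ∈ Δ, γ = ∑ α ∈ base, coord γ α • α
  pos_or_neg : ∀ γ ∈ Δ, (∀ α ∈ base, 0 ≤ coord γ α) ∨ (∀ α ∈ base, coord γ α ≤ 0)
  coord_int : ∀ γ ∈ Δ, ∀ α ∈ base, ∃ k : ℤ, coord γ α = (k : ℝ)
  irreducible : ∀ S ⊆ Δ, S.Nonempty →
    (∀ γ ∈ S, ∀ δ ∈ Δ, δ ∉ S → ⟪γ, δ⟫ = 0) → S = Δ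
  fw : V → V
  fw_spec : ∀ α ∈ base, ∀ β ∈ base, ⟪fw α, β⟫ = if β = α then ⟪α, α⟫ / 2 else 0

namespace RootSystemData

variable {V : Type*} [NormedAddCommGroup V] [InnerProductSpace ℝ V]

/-- The set of positive roots (nonnegative coordinates w.r.t. the base). -/
noncomputable def posRoots (R : RootSystemData V) : Finset V :=
  R.Δ.filter fun γ => ∀ α ∈ R.base, 0 ≤ R.coord γ α

/-- The height of a root: the sum of its coordinates in the base. -/
noncomputable def ht (R : RootSystemData V) (γ : V) : ℝ :=
  ∑ α ∈ R.base, R.coord γ α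

/-- The height of the coroot `γ^∨` in the dual root system. -/
noncomputable def dualHt (R : RootSystemData V) (γ : V) : ℝ :=
  ∑ α ∈ R.base, R.coord γ α * ⟪α, α⟫ / ⟪γ, γ⟫

/-- `R_α`: the set of roots having positive inner product with the fundamental
weight `ϖ_α`. -/
noncomputable def Rset (R : RootSystemData V) (α : V) : Finset V :=
  R.Δ.filter fun γ => 0 < ⟪γ, R.fw α⟫

/-- `Δ_α(i)`: the set of roots whose coefficient of `α` equals `i`. -/
noncomputable def level (R : RootSystemData V) (α : V) (i : ℤ) : Finset V :=
  R.Δ.filter fun γ => R.coord γ α = (i : ℝ)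

end RootSystemData

/-!
Pairing a root `γ` with `ϖ_α` gives `coord γ α * (α, α) / 2`. For `θ = ϖ_α̂` with `α̂`-coefficient
`c` this yields `(θ, θ) = c (α̂, α̂) / 2`, and integrality of the Cartan integer
`2 (α̂, θ) / (θ, θ) = 2 / c` leaves `c ∈ {1, 2}`; maximality of `θ` excludes `c = 1`.
For `q`: the roots outside `R_α̂` that are positive are orthogonal to `ϖ_α̂`, so pairing with `θ`
turns `∑ R_α̂ = q θ` into `q (θ, θ) = (2ρ, θ)`, and `(2ρ, β) = (β, β)` for simple `β` (a simple
reflection permutes the other positive roots) gives `(2ρ, θ) = ht(θ^∨) (θ, θ)`.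
-/

namespace RootSystemData

variable {V : Type*} [NormedAddCommGroup V] [InnerProductSpace ℝ V]

lemma eq_one_or_two_of_two_div_eq_int {c m : ℤ} (hc : 0 < c) (h : (2 : ℝ) / c = m) :
    c = 1 ∨ c = 2 := by
  have hc' : (c : ℝ) ≠ 0 := by exact_mod_cast hc.ne'
  have hmc : m * c = 2 := by
    have : (m : ℝ) * c = 2 := by rw [← h]; field_simp
    exact_mod_cast this
  have := Int.le_of_dvd two_pos (Dvd.intro_left m hmc)
  omega

noncomputable def reflect (β γ : V) : V := γ - (2 * ⟪γ, β⟫ / ⟪β, β⟫) • β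

lemma inner_reflect_left {β : V} (hβ : β ≠ 0) (γ : V) : ⟪reflect β γ, β⟫ = -⟪γ, β⟫ := by
  have : ⟪β, β⟫ ≠ 0 := (real_inner_self_pos.2 hβ).ne'
  rw [reflect, inner_sub_left, real_inner_smul_left]
  field_simp
  ring

lemma reflect_reflect {β : V} (hβ : β ≠ 0) (γ : V) : reflect β (reflect β γ) = γ := by
  change reflect β γ - (2 * ⟪reflect β γ, β⟫ / ⟪β, β⟫) • β = γ
  rw [inner_reflect_left hβ, reflect]
  module

lemma reflect_self {β : V} (hβ : β ≠ 0) : reflect β β = -β := by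
  have : ⟪β, β⟫ ≠ 0 := (real_inner_self_pos.2 hβ).ne'
  rw [reflect, mul_div_assoc, div_self this]
  module

variable (R : RootSystemData V)

lemma inner_self_pos_of_mem {γ : V} (hγ : γ ∈ R.Δ) : 0 < ⟪γ, γ⟫ :=
  real_inner_self_pos.2 (R.root_ne_zero γ hγ)

lemma reflect_mem_of_mem {β γ : V} (hβ : β ∈ R.Δ) (hγ : γ ∈ R.Δ) : reflect β γ ∈ R.Δ :=
  R.reflect_mem β hβ γ hγ

lemma neg_mem {γ : V} (hγ : γ ∈ R.Δ) : -γ ∈ R.Δ := by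
  simpa only [reflect_self (R.root_ne_zero γ hγ)] using R.reflect_mem_of_mem hγ hγ

lemma coord_sub (α x y : V) : R.coord (x - y) α = R.coord x α - R.coord y α := by
  rw [sub_eq_add_neg, ← neg_one_smul ℝ y, R.coord_add, R.coord_smul]
  ring

lemma coord_reflect_of_ne {α β : V} (hα : α ∈ R.base) (hβ : β ∈ R.base) (hne : α ≠ β)
    (γ : V) : R.coord (reflect β γ) α = R.coord γ α := by
  rw [reflect, R.coord_sub, R.coord_smul, R.coord_base α hα β hβ, if_neg hne.symm, mul_zero,
    sub_zero]

lemma inner_fw_of_mem {γ α : V} (hγ : γ ∈ R.Δ) (hα : α ∈ R.base) :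
    ⟪γ, R.fw α⟫ = R.coord γ α * (⟪α, α⟫ / 2) := by
  conv_lhs => rw [R.root_decomp γ hγ, sum_inner]
  rw [Finset.sum_eq_single α]
  · rw [real_inner_smul_left, real_inner_comm, R.fw_spec α hα α hα, if_pos rfl]
  · intro β hβ hne
    rw [real_inner_smul_left, real_inner_comm, R.fw_spec α hα β hβ, if_neg hne, mul_zero]
  · exact fun h => absurd hα h

lemma mem_posRoots_of_coord_pos {γ α : V} (hγ : γ ∈ R.Δ) (hα : α ∈ R.base)
    (h : 0 < R.coord γ α) : γ ∈ R.posRoots :=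
  Finset.mem_filter.2 ⟨hγ, (R.pos_or_neg γ hγ).resolve_right fun hn => (hn α hα).not_gt h⟩

lemma eq_one_of_int_smul_mem {β : V} (hβ : β ∈ R.Δ) {c : ℤ} (hc : 0 < c)
    (h : (c : ℝ) • β ∈ R.Δ) : c = 1 := by
  have hββ := R.inner_self_pos_of_mem hβ
  have hc' : (c : ℝ) ≠ 0 := by exact_mod_cast hc.ne'
  obtain ⟨m, hm⟩ := R.crystallographic _ h β hβ
  have h2c : (2 : ℝ) / c = m := by
    rw [← hm, real_inner_smul_right, real_inner_smul_left, real_inner_smul_right]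
    field_simp
  rcases eq_one_or_two_of_two_div_eq_int hc h2c with h1 | rfl
  · exact h1
  · exact absurd (by exact_mod_cast h) (R.reduced β hβ)

lemma eq_of_coord_eq_zero_of_ne {β γ : V} (hβ : β ∈ R.base) (hγ : γ ∈ R.posRoots)
    (h : ∀ α ∈ R.base, α ≠ β → R.coord γ α = 0) : γ = β := by
  obtain ⟨hγΔ, hγpos⟩ := Finset.mem_filter.1 hγ
  have hdecomp : γ = R.coord γ β • β := by
    conv_lhs => rw [R.root_decomp γ hγΔ]
    refine Finset.sum_eq_single β (fun α hα hne => by rw [h α hα hne, zero_smul]) ?_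
    exact fun h => absurd hβ h
  obtain ⟨c, hc⟩ := R.coord_int γ hγΔ β hβ
  have hc0 : 0 < c := by
    refine lt_of_le_of_ne (by exact_mod_cast hc ▸ hγpos β hβ) fun h0 => ?_
    exact R.root_ne_zero γ hγΔ (by rw [hdecomp, hc, ← h0, Int.cast_zero, zero_smul])
  rw [hc] at hdecomp
  have hc1 := R.eq_one_of_int_smul_mem (R.base_sub hβ) hc0 (hdecomp ▸ hγΔ)
  rw [hdecomp, hc1, Int.cast_one, one_smul]

lemma reflect_mem_posRoots_erase {β γ : V} (hβ : β ∈ R.base) (hγ : γ ∈ R.posRoots.erase β) :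
    reflect β γ ∈ R.posRoots.erase β := by
  obtain ⟨hne, hγpos⟩ := Finset.mem_erase.1 hγ
  have hγΔ := (Finset.mem_filter.1 hγpos).1
  have hsΔ := R.reflect_mem_of_mem (R.base_sub hβ) hγΔ
  have hcoord : ∀ α ∈ R.base, α ≠ β → R.coord (reflect β γ) α = R.coord γ α :=
    fun α hα hαβ => R.coord_reflect_of_ne hα hβ hαβ γ
  refine Finset.mem_erase.2 ⟨fun hsβ => hne ?_, Finset.mem_filter.2 ⟨hsΔ, ?_⟩⟩
  · refine R.eq_of_coord_eq_zero_of_ne hβ hγpos fun α hα hαβ => ?_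
    rw [← hcoord α hα hαβ, hsβ, R.coord_base α hα β hβ, if_neg hαβ.symm]
  · refine (R.pos_or_neg _ hsΔ).resolve_right fun hneg => hne ?_
    refine R.eq_of_coord_eq_zero_of_ne hβ hγpos fun α hα hαβ => ?_
    exact le_antisymm (hcoord α hα hαβ ▸ hneg α hα) ((Finset.mem_filter.1 hγpos).2 α hα)

lemma inner_sum_posRoots_of_mem_base {β : V} (hβ : β ∈ R.base) :
    ⟪∑ γ ∈ R.posRoots, γ, β⟫ = ⟪β, β⟫ := by
  have hβ0 := R.root_ne_zero β (R.base_sub hβ)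
  have hβpos : β ∈ R.posRoots :=
    R.mem_posRoots_of_coord_pos (R.base_sub hβ) hβ (by simp [R.coord_base β hβ β hβ])
  have hzero : ∑ γ ∈ R.posRoots.erase β, ⟪γ, β⟫ = 0 := by
    refine Finset.sum_involution (fun γ _ => reflect β γ)
      (fun γ _ => by rw [inner_reflect_left hβ0, add_neg_cancel]) (fun γ _ hγ hfix => hγ ?_)
      (fun γ hγ => R.reflect_mem_posRoots_erase hβ hγ) (fun γ _ => reflect_reflect hβ0 γ)
    linarith [inner_reflect_left hβ0 γ, congrArg (⟪·, β⟫) hfix]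
  rw [sum_inner, ← Finset.add_sum_erase _ _ hβpos, hzero, add_zero]

lemma dualHt_mul_inner_self {γ : V} (hγ : γ ∈ R.Δ) :
    R.dualHt γ * ⟪γ, γ⟫ = ⟪∑ δ ∈ R.posRoots, δ, γ⟫ := by
  rw [dualHt, ← Finset.sum_div, div_mul_cancel₀ _ (R.inner_self_pos_of_mem hγ).ne']
  conv_rhs => rw [R.root_decomp γ hγ, inner_sum]
  refine Finset.sum_congr rfl fun β hβ => ?_
  rw [real_inner_smul_right, R.inner_sum_posRoots_of_mem_base hβ]

lemma Rset_subset_posRoots {α : V} (hα : α ∈ R.base) : R.Rset α ⊆ R.posRoots := by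
  intro γ hγ
  obtain ⟨hγΔ, hpos⟩ := Finset.mem_filter.1 hγ
  rw [R.inner_fw_of_mem hγΔ hα] at hpos
  exact R.mem_posRoots_of_coord_pos hγΔ hα
    (pos_of_mul_pos_left hpos (by linarith [R.inner_self_pos_of_mem (R.base_sub hα)]))

lemma inner_sum_Rset_fw {α : V} (hα : α ∈ R.base) :
    ⟪∑ γ ∈ R.Rset α, γ, R.fw α⟫ = ⟪∑ γ ∈ R.posRoots, γ, R.fw α⟫ := by
  rw [sum_inner, sum_inner]
  refine Finset.sum_subset (R.Rset_subset_posRoots hα) fun γ hγ hγR => ?_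
  obtain ⟨hγΔ, hγpos⟩ := Finset.mem_filter.1 hγ
  refine le_antisymm (not_lt.1 fun h => hγR (Finset.mem_filter.2 ⟨hγΔ, h⟩)) ?_
  rw [R.inner_fw_of_mem hγΔ hα]
  have := R.inner_self_pos_of_mem (R.base_sub hα)
  have := hγpos α hα
  positivity

lemma eq_dualHt_of_sum_Rset_eq_smul_fw {α : V} (hα : α ∈ R.base) (hfw : R.fw α ∈ R.Δ) {q : ℝ}
    (hq : ∑ γ ∈ R.Rset α, γ = q • R.fw α) : q = R.dualHt (R.fw α) := by
  refine mul_right_cancel₀ (R.inner_self_pos_of_mem hfw).ne' ?_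
  rw [R.dualHt_mul_inner_self hfw, ← R.inner_sum_Rset_fw hα, hq, real_inner_smul_left]

lemma coord_fw_self_eq_one_or_two {α : V} (hα : α ∈ R.base) (hfw : R.fw α ∈ R.Δ) :
    R.coord (R.fw α) α = 1 ∨ R.coord (R.fw α) α = 2 := by
  have hαα := R.inner_self_pos_of_mem (R.base_sub hα)
  have hθθ := R.inner_fw_of_mem hfw hα
  obtain ⟨c, hc⟩ := R.coord_int _ hfw α hα
  have hc0 : 0 < c := by
    have : (0 : ℝ) < c := by nlinarith [R.inner_self_pos_of_mem hfw]
    exact_mod_cast this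
  obtain ⟨m, hm⟩ := R.crystallographic _ hfw α (R.base_sub hα)
  have h2c : (2 : ℝ) / c = m := by
    rw [← hm, hθθ, hc, real_inner_comm, R.fw_spec α hα α hα, if_pos rfl]
    field_simp
  rw [hc]
  rcases eq_one_or_two_of_two_div_eq_int hc0 h2c with rfl | rfl <;> norm_num

/-- If `ϖ_α` has `α`-coefficient `1`, then `s_{ϖ_α} α = α - 2 ϖ_α`, so `2 ϖ_α - α` is a root;
a highest root then has no other simple root in its support, hence equals `α`, which is absurd. -/
lemma coord_fw_self_eq_two {α : V} (hα : α ∈ R.base) (hfw : R.fw α ∈ R.Δ)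
    (hmax : ∀ γ ∈ R.Δ, ∀ β ∈ R.base, R.coord γ β ≤ R.coord (R.fw α) β) :
    R.coord (R.fw α) α = 2 := by
  refine (R.coord_fw_self_eq_one_or_two hα hfw).resolve_left fun hc1 => ?_
  have hαα := R.inner_self_pos_of_mem (R.base_sub hα)
  have hαθ : ⟪α, R.fw α⟫ = ⟪α, α⟫ / 2 := by
    rw [real_inner_comm, R.fw_spec α hα α hα, if_pos rfl]
  have hθθ : ⟪R.fw α, R.fw α⟫ = ⟪α, α⟫ / 2 := by
    rw [R.inner_fw_of_mem hfw hα, hc1, one_mul]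
  have hroot : (2 : ℝ) • R.fw α - α ∈ R.Δ := by
    have h := R.neg_mem (R.reflect_mem_of_mem hfw (R.base_sub hα))
    rwa [reflect, hαθ, hθθ, mul_div_assoc, div_self (half_pos hαα).ne', mul_one, neg_sub] at h
  have hθpos := R.mem_posRoots_of_coord_pos hfw hα (by rw [hc1]; exact one_pos)
  have hθα : R.fw α = α := R.eq_of_coord_eq_zero_of_ne hα hθpos fun β hβ hne => by
    have h := hmax _ hroot β hβ
    rw [R.coord_sub, two_smul, R.coord_add, R.coord_base β hβ α hα, if_neg hne.symm] at h
    exact le_antisymm (by linarith) ((Finset.mem_filter.1 hθpos).2 β hβ)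
  rw [hθα] at hθθ
  linarith

end RootSystemData

theorem q_of_fundamental_highest_root_general
    {V : Type*} [NormedAddCommGroup V] [InnerProductSpace ℝ V]
    (R : RootSystemData V) (αh : V) (hαh : αh ∈ R.base)
    (θ : V) (hθ : θ ∈ R.Δ)
    (hθmax : ∀ γ ∈ R.Δ, ∀ β ∈ R.base, R.coord γ β ≤ R.coord θ β)
    (hfund : θ = R.fw αh)
    (q : ℕ) (hq : (∑ γ ∈ R.Rset αh, γ) = (q : ℝ) • R.fw αh) :
    ⟪αh, αh⟫ = ⟪θ, θ⟫ ∧ R.coord θ αh = 2 ∧ (q : ℝ) = (R.dualHt θ + 1) - 1 := by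
  subst hfund
  have hcoord := R.coord_fw_self_eq_two hαh hθ hθmax
  refine ⟨?_, hcoord, ?_⟩
  · rw [R.inner_fw_of_mem hθ hαh, hcoord]
    ring
  · rw [R.eq_dualHt_of_sum_Rset_eq_smul_fw hαh hθ hq]
    ring

/-- If the highest root `θ` is a fundamental weight, `θ = ϖ_α̂` with
`(θ, α̂) ≠ 0`, then `α̂` is long, the coefficient of `α̂` in `θ` is `2`, and
`q_α̂ = h* − 1`. -/
theorem q_of_fundamental_highest_root
    {V : Type*} [NormedAddCommGroup V] [InnerProductSpace ℝ V]
    (R : RootSystemData V) (αh : V) (hαh : αh ∈ R.base)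
    (θ : V) (hθ : θ ∈ R.Δ)
    (hθmax : ∀ γ ∈ R.Δ, ∀ β ∈ R.base, R.coord γ β ≤ R.coord θ β)
    (hfund : θ = R.fw αh) (hne : ⟪θ, αh⟫ ≠ 0)
    (q : ℕ) (hq : (∑ γ ∈ R.Rset αh, γ) = (q : ℝ) • R.fw αh) :
    ⟪αh, αh⟫ = ⟪θ, θ⟫ ∧ R.coord θ αh = 2 ∧ (q : ℝ) = (R.dualHt θ + 1) - 1 :=
  q_of_fundamental_highest_root_general R αh hαh θ hθ hθmax hfund q hq
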